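/- For every even integer E ≥ 2, |π - π_E| < π/E, where π_E is the truncated Wallis product. -/

import Mathlib

/-- The truncated Wallis product `π_E = (2·E(E-2)²···4²·2²)/((E-1)²(E-3)²···3²·1²)`,
as a function of an even `E`. -/
noncomputable def wallisTrunc (E : ℕ) : ℝ :=
  2 * (∏ k ∈ Finset.Icc 1 (E / 2 - 1), (2 * (k : ℝ)) ^ 2 / ((2 * k - 1) * (2 * k + 1)))
    * ((E : ℝ) / (E - 1))

/-! With the Wallis partial products `W n = ∏_{k<n} (2k+2)²/((2k+1)(2k+3))` one has
`π_{2n+2} = 2 W(n) (2n+2)/(2n+1) = 2 W(n+1) (2n+3)/(2n+2)`. The sine-integral bounds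
`(2n+1)/(2n+2) · π/2 ≤ W(n) ≤ π/2`, the second made strict because `W` is strictly increasing,
then give `π ≤ π_{2n+2} < π (2n+3)/(2n+2) = π + π/(2n+2)`. -/

namespace Real.Wallis

theorem W_lt_W_succ (k : ℕ) : W k < W (k + 1) := by
  have hfactor : 1 < (2 * k + 2) / (2 * k + 1) * ((2 * k + 2) / (2 * k + 3) : ℝ) := by
    rw [div_mul_div_comm, one_lt_div (by positivity)]
    nlinarith
  rw [W_succ]
  exact lt_mul_of_one_lt_right (W_pos k) hfactor

theorem W_lt_pi_div_two (k : ℕ) : W k < π / 2 :=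
  (W_lt_W_succ k).trans_le (W_le (k + 1))

theorem prod_Icc_eq_W (n : ℕ) :
    ∏ k ∈ Finset.Icc 1 n, (2 * (k : ℝ)) ^ 2 / ((2 * k - 1) * (2 * k + 1)) = W n := by
  induction n with
  | zero => simp [W]
  | succ n ih =>
    rw [Finset.prod_Icc_succ_top (by omega), ih, W_succ]
    congr 1
    have h1 : (0 : ℝ) < 2 * ((n : ℝ) + 1) - 1 := by linarith [n.cast_nonneg (α := ℝ)]
    push_cast
    field_simp
    ring

end Real.Wallis

open Real Real.Wallis

theorem wallisTrunc_eq_W (n : ℕ) :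
    wallisTrunc (2 * n + 2) = 2 * W n * ((2 * n + 2) / (2 * n + 1)) := by
  rw [wallisTrunc, show (2 * n + 2) / 2 - 1 = n by omega, prod_Icc_eq_W]
  push_cast
  ring

theorem wallisTrunc_eq_W_succ (n : ℕ) :
    wallisTrunc (2 * n + 2) = 2 * W (n + 1) * ((2 * n + 3) / (2 * n + 2)) := by
  rw [wallisTrunc_eq_W, W_succ]
  field_simp

theorem pi_le_wallisTrunc (n : ℕ) : π ≤ wallisTrunc (2 * n + 2) := by
  have hlow := le_W n
  rw [wallisTrunc_eq_W]
  calc π = 2 * ((2 * n + 1) / (2 * n + 2) * (π / 2)) * ((2 * n + 2) / (2 * n + 1)) := by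
        field_simp
    _ ≤ 2 * W n * ((2 * n + 2) / (2 * n + 1)) := by gcongr

theorem wallisTrunc_lt_pi_add (n : ℕ) : wallisTrunc (2 * n + 2) < π + π / (2 * n + 2) := by
  rw [wallisTrunc_eq_W_succ]
  calc 2 * W (n + 1) * ((2 * n + 3) / (2 * n + 2)) < 2 * (π / 2) * ((2 * n + 3) / (2 * n + 2)) := by
        gcongr
        exact W_lt_pi_div_two (n + 1)
    _ = π + π / (2 * n + 2) := by
        field_simp
        ring

theorem wallis_trunc_error (E : ℕ) (hE : Even E) (hE2 : 2 ≤ E) :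
    |Real.pi - wallisTrunc E| < Real.pi / E := by
  obtain ⟨n, rfl⟩ : ∃ n, E = 2 * n + 2 := by
    obtain ⟨m, hm⟩ := hE
    exact ⟨m - 1, by omega⟩
  have hpi_le := pi_le_wallisTrunc n
  have hlt := wallisTrunc_lt_pi_add n
  have hpos : 0 < π / (2 * n + 2) := by positivity
  push_cast
  rw [abs_sub_lt_iff]
  constructor <;> linarith
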